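/- arXiv:2507.20064 — 5 statements merged into one kernel-verified Lean document; each statement's English description precedes it below -/
import Mathlib

section
/- Let P_4(X) = X^4 + A_3 X^3 + A_2 X^2 + A_1 X + A_0 be a monic real quartic with all four roots real. Then all roots lie in the interval [-1, 1] if and only if the following three inequalities hold: (i) |A_3|/4 ≤ min{1, 1/2 + A_2/12}; (ii) |A_1 + 3A_3|/4 ≤ 1 + A_2/2; (iii) |A_1 + A_3| ≤ 1 + A_0 + A_2. -/
open Polynomial

lemma multiset_card_eq_four {α : Type*} {s : Multiset α} (h : Multiset.card s = 4) :
    ∃ a b c d, s = {a, b, c, d} := by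
  obtain ⟨a, ha⟩ := Multiset.card_pos_iff_exists_mem.mp (by rw [h]; norm_num)
  obtain ⟨t, rfl⟩ := Multiset.exists_cons_of_mem ha
  rw [Multiset.card_cons] at h
  obtain ⟨b, c, d, rfl⟩ := Multiset.card_eq_three.mp (show Multiset.card t = 3 by omega)
  exact ⟨a, b, c, d, rfl⟩


/-- For a monic real quartic `X^4 + A3 X^3 + A2 X^2 + A1 X + A0` with all
four roots real, all roots lie in `[-1,1]` iff the three stated inequalities hold. -/
theorem quartic_roots_in_unit_interval_iff
    (A0 A1 A2 A3 : ℝ)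
    (P : Polynomial ℝ)
    (hP : P = X ^ 4 + C A3 * X ^ 3 + C A2 * X ^ 2 + C A1 * X + C A0)
    (hsplit : P.Splits) :
    (∀ r ∈ P.roots, |r| ≤ 1) ↔
      (|A3| / 4 ≤ min 1 (1 / 2 + A2 / 12) ∧
       |A1 + 3 * A3| / 4 ≤ 1 + A2 / 2 ∧
       |A1 + A3| ≤ 1 + A0 + A2) := by
  have hmonic : P.Monic := by rw [hP]; monicity!
  have hdeg : P.natDegree = 4 := by rw [hP]; compute_degree!
  constructor
  · intro hroots
    have hcard : Multiset.card P.roots = 4 := by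
      rw [splits_iff_card_roots.mp hsplit, hdeg]
    obtain ⟨a, b, c, d, hR⟩ := multiset_card_eq_four hcard
    have hprod := hsplit.eq_prod_roots_of_monic hmonic
    rw [hR, hP] at hprod
    have key : ∀ x : ℝ, x^4 + A3*x^3 + A2*x^2 + A1*x + A0
        = (x-a)*((x-b)*((x-c)*(x-d))) := by
      intro x
      have := congrArg (eval x) hprod
      simpa [Multiset.insert_eq_cons, mul_assoc] using this
    have hA3 : A3 = -(a+b+c+d) := by
      linear_combination (1/12)*(key 2) - (1/12)*(key (-2)) - (1/6)*(key 1) + (1/6)*(key (-1))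
    have hA2 : A2 = a*b+a*c+a*d+b*c+b*d+c*d := by
      linear_combination (1/2)*(key 1) + (1/2)*(key (-1)) - (key 0)
    have hA1 : A1 = -(a*b*c + a*b*d + a*c*d + b*c*d) := by
      linear_combination (2/3)*(key 1) - (2/3)*(key (-1)) - (1/12)*(key 2) + (1/12)*(key (-2))
    have hA0 : A0 = a*(b*(c*d)) := by linear_combination key 0
    have ha := abs_le.mp (hroots a (by rw [hR]; simp))
    have hb := abs_le.mp (hroots b (by rw [hR]; simp))
    have hc := abs_le.mp (hroots c (by rw [hR]; simp))
    have hd := abs_le.mp (hroots d (by rw [hR]; simp))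
    obtain ⟨ha1, ha2⟩ := ha; obtain ⟨hb1, hb2⟩ := hb
    obtain ⟨hc1, hc2⟩ := hc; obtain ⟨hd1, hd2⟩ := hd
    have pa : (0:ℝ) ≤ 1 + a := by linarith
    have pb : (0:ℝ) ≤ 1 + b := by linarith
    have pc : (0:ℝ) ≤ 1 + c := by linarith
    have pd : (0:ℝ) ≤ 1 + d := by linarith
    have ma : (0:ℝ) ≤ 1 - a := by linarith
    have mb : (0:ℝ) ≤ 1 - b := by linarith
    have mc : (0:ℝ) ≤ 1 - c := by linarith
    have md : (0:ℝ) ≤ 1 - d := by linarith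
    subst hA3 hA2 hA1 hA0
    refine ⟨le_min ?_ ?_, ?_, ?_⟩
    · rw [div_le_one (by norm_num), abs_le]
      constructor <;> linarith
    · rcases abs_cases (-(a+b+c+d)) with ⟨h, _⟩ | ⟨h, _⟩ <;> rw [h] <;>
        linarith [mul_nonneg pa pb, mul_nonneg pa pc, mul_nonneg pa pd,
          mul_nonneg pb pc, mul_nonneg pb pd, mul_nonneg pc pd,
          mul_nonneg ma mb, mul_nonneg ma mc, mul_nonneg ma md,
          mul_nonneg mb mc, mul_nonneg mb md, mul_nonneg mc md]
    · rcases abs_cases (-(a*b*c + a*b*d + a*c*d + b*c*d) + 3 * -(a+b+c+d)) with ⟨h, _⟩ | ⟨h, _⟩ <;>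
        rw [h] <;>
        linarith [mul_nonneg (mul_nonneg pb pc) pd, mul_nonneg (mul_nonneg pa pc) pd,
          mul_nonneg (mul_nonneg pa pb) pd, mul_nonneg (mul_nonneg pa pb) pc,
          mul_nonneg (mul_nonneg mb mc) md, mul_nonneg (mul_nonneg ma mc) md,
          mul_nonneg (mul_nonneg ma mb) md, mul_nonneg (mul_nonneg ma mb) mc]
    · rcases abs_cases (-(a*b*c + a*b*d + a*c*d + b*c*d) + -(a+b+c+d)) with ⟨h, _⟩ | ⟨h, _⟩ <;>
        rw [h] <;>
        linarith [mul_nonneg (mul_nonneg (mul_nonneg pa pb) pc) pd,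
          mul_nonneg (mul_nonneg (mul_nonneg ma mb) mc) md]
  · rintro ⟨h1, h2, h3⟩ r hr
    have hev : P.eval r = 0 := isRoot_of_mem_roots hr
    rw [hP] at hev
    simp only [eval_add, eval_mul, eval_pow, eval_C, eval_X] at hev
    rw [le_min_iff] at h1
    obtain ⟨h1a, h1b⟩ := h1
    have e1 : |A3| ≤ 4 := by linarith
    have e2 : |A3| ≤ 2 + A2/3 := by linarith
    obtain ⟨e1a, e1b⟩ := abs_le.mp e1
    obtain ⟨e2a, e2b⟩ := abs_le.mp e2
    obtain ⟨f1, f2⟩ := abs_le.mp (show |A1 + 3*A3| ≤ 4 + 2*A2 by linarith)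
    obtain ⟨g1, g2⟩ := abs_le.mp h3
    by_contra hcon
    push_neg at hcon
    rcases abs_cases r with ⟨hre, _⟩ | ⟨hre, hrneg⟩
    · have hr1 : 0 < r - 1 := by rw [hre] at hcon; linarith
      nlinarith [mul_nonneg (show (0:ℝ) ≤ 4 + 3*A3 + 2*A2 + A1 by linarith) hr1.le,
        mul_nonneg (show (0:ℝ) ≤ 12 + 6*A3 + 2*A2 by linarith) (sq_nonneg (r-1)),
        mul_nonneg (show (0:ℝ) ≤ 24 + 6*A3 by linarith) (pow_nonneg hr1.le 3),
        pow_pos hr1 4]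
    · have hr1 : 0 < -(r + 1) := by rw [hre] at hcon; linarith
      nlinarith [mul_nonneg (show (0:ℝ) ≤ 4 - 3*A3 + 2*A2 - A1 by linarith) hr1.le,
        mul_nonneg (show (0:ℝ) ≤ 12 - 6*A3 + 2*A2 by linarith) (sq_nonneg (r+1)),
        mul_nonneg (show (0:ℝ) ≤ 24 - 6*A3 by linarith) (pow_nonneg hr1.le 3),
        pow_pos hr1 4]
end

section
/- Let P_5(X) = X^5 + A_4 X^4 + A_3 X^3 + A_2 X^2 + A_1 X + A_0 be a monic real quintic with all five roots real. Then all roots lie in [-1, 1] if and only if the following five inequalities hold: (i) |A_4| ≤ 5; (ii) 4|A_4| ≤ 10 + A_3; (iii) |A_2 + 6A_4| ≤ 10 + 3A_3; (iv) |2A_2 + 4A_4| ≤ 5 + A_1 + 3A_3; (v) |A_0 + A_2 + A_4| ≤ 1 + A_1 + A_3. -/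
open Polynomial

private lemma quintic_aux_back (A0 A1 A2 A3 A4 r : ℝ)
    (hroot : r^5 + A4*r^4 + A3*r^3 + A2*r^2 + A1*r + A0 = 0)
    (hc0 : 0 ≤ 1 + A4 + A3 + A2 + A1 + A0)
    (hc1 : 0 ≤ 5 + 4*A4 + 3*A3 + 2*A2 + A1)
    (hc2 : 0 ≤ 10 + 6*A4 + 3*A3 + A2)
    (hc3 : 0 ≤ 10 + 4*A4 + A3)
    (hc4 : 0 ≤ 5 + A4)
    (hd0 : 0 ≤ 1 - A4 + A3 - A2 + A1 - A0)
    (hd1 : 0 ≤ 5 - 4*A4 + 3*A3 - 2*A2 + A1)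
    (hd2 : 0 ≤ 10 - 6*A4 + 3*A3 - A2)
    (hd3 : 0 ≤ 10 - 4*A4 + A3)
    (hd4 : 0 ≤ 5 - A4) : |r| ≤ 1 := by
  rw [abs_le]
  constructor
  · by_contra h
    push_neg at h
    have hr : 0 < -1 - r := by linarith
    nlinarith [mul_nonneg hd1 hr.le, mul_nonneg hd2 (by positivity : (0:ℝ) ≤ (-1-r)^2),
      mul_nonneg hd3 (by positivity : (0:ℝ) ≤ (-1-r)^3),
      mul_nonneg hd4 (by positivity : (0:ℝ) ≤ (-1-r)^4), pow_pos hr 5]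
  · by_contra h
    push_neg at h
    have hr : 0 < r - 1 := by linarith
    nlinarith [mul_nonneg hc1 hr.le, mul_nonneg hc2 (by positivity : (0:ℝ) ≤ (r-1)^2),
      mul_nonneg hc3 (by positivity : (0:ℝ) ≤ (r-1)^3),
      mul_nonneg hc4 (by positivity : (0:ℝ) ≤ (r-1)^4), pow_pos hr 5]

private lemma quintic_aux_fwd (r1 r2 r3 r4 r5 A0 A1 A2 A3 A4 : ℝ)
    (hA4 : A4 = -(r1+r2+r3+r4+r5))
    (hA3 : A3 = r1*r2+r1*r3+r1*r4+r1*r5+r2*r3+r2*r4+r2*r5+r3*r4+r3*r5+r4*r5)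
    (hA2 : A2 = -(r1*r2*r3+r1*r2*r4+r1*r2*r5+r1*r3*r4+r1*r3*r5+r1*r4*r5+r2*r3*r4+r2*r3*r5+r2*r4*r5+r3*r4*r5))
    (hA1 : A1 = r1*r2*r3*r4+r1*r2*r3*r5+r1*r2*r4*r5+r1*r3*r4*r5+r2*r3*r4*r5)
    (hA0 : A0 = -(r1*r2*r3*r4*r5))
    (ha1 : 0 ≤ 1 - r1) (ha2 : 0 ≤ 1 - r2) (ha3 : 0 ≤ 1 - r3) (ha4 : 0 ≤ 1 - r4) (ha5 : 0 ≤ 1 - r5)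
    (hb1 : 0 ≤ 1 + r1) (hb2 : 0 ≤ 1 + r2) (hb3 : 0 ≤ 1 + r3) (hb4 : 0 ≤ 1 + r4) (hb5 : 0 ≤ 1 + r5) :
    (0 ≤ 5 + A4) ∧
    (0 ≤ 5 - A4) ∧
    (0 ≤ 10 + 4*A4 + A3) ∧
    (0 ≤ 10 - 4*A4 + A3) ∧
    (0 ≤ 10 + 6*A4 + 3*A3 + A2) ∧
    (0 ≤ 10 - 6*A4 + 3*A3 - A2) ∧
    (0 ≤ 5 + 4*A4 + 3*A3 + 2*A2 + A1) ∧
    (0 ≤ 5 - 4*A4 + 3*A3 - 2*A2 + A1) ∧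
    (0 ≤ 1 + A4 + A3 + A2 + A1 + A0) ∧
    (0 ≤ 1 - A4 + A3 - A2 + A1 - A0) := by
  subst hA4 hA3 hA2 hA1 hA0
  refine ⟨?_, ?_, ?_, ?_, ?_, ?_, ?_, ?_, ?_, ?_⟩
  · linarith [ha1, ha2, ha3, ha4, ha5]
  · linarith [hb1, hb2, hb3, hb4, hb5]
  · linarith [(mul_nonneg (ha1) ha2), (mul_nonneg (ha1) ha3), (mul_nonneg (ha1) ha4), (mul_nonneg (ha1) ha5), (mul_nonneg (ha2) ha3), (mul_nonneg (ha2) ha4), (mul_nonneg (ha2) ha5), (mul_nonneg (ha3) ha4), (mul_nonneg (ha3) ha5), (mul_nonneg (ha4) ha5)]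
  · linarith [(mul_nonneg (hb1) hb2), (mul_nonneg (hb1) hb3), (mul_nonneg (hb1) hb4), (mul_nonneg (hb1) hb5), (mul_nonneg (hb2) hb3), (mul_nonneg (hb2) hb4), (mul_nonneg (hb2) hb5), (mul_nonneg (hb3) hb4), (mul_nonneg (hb3) hb5), (mul_nonneg (hb4) hb5)]
  · linarith [(mul_nonneg (mul_nonneg (ha1) ha2) ha3), (mul_nonneg (mul_nonneg (ha1) ha2) ha4), (mul_nonneg (mul_nonneg (ha1) ha2) ha5), (mul_nonneg (mul_nonneg (ha1) ha3) ha4), (mul_nonneg (mul_nonneg (ha1) ha3) ha5), (mul_nonneg (mul_nonneg (ha1) ha4) ha5), (mul_nonneg (mul_nonneg (ha2) ha3) ha4), (mul_nonneg (mul_nonneg (ha2) ha3) ha5), (mul_nonneg (mul_nonneg (ha2) ha4) ha5), (mul_nonneg (mul_nonneg (ha3) ha4) ha5)]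
  · linarith [(mul_nonneg (mul_nonneg (hb1) hb2) hb3), (mul_nonneg (mul_nonneg (hb1) hb2) hb4), (mul_nonneg (mul_nonneg (hb1) hb2) hb5), (mul_nonneg (mul_nonneg (hb1) hb3) hb4), (mul_nonneg (mul_nonneg (hb1) hb3) hb5), (mul_nonneg (mul_nonneg (hb1) hb4) hb5), (mul_nonneg (mul_nonneg (hb2) hb3) hb4), (mul_nonneg (mul_nonneg (hb2) hb3) hb5), (mul_nonneg (mul_nonneg (hb2) hb4) hb5), (mul_nonneg (mul_nonneg (hb3) hb4) hb5)]
  · linarith [(mul_nonneg (mul_nonneg (mul_nonneg (ha1) ha2) ha3) ha4), (mul_nonneg (mul_nonneg (mul_nonneg (ha1) ha2) ha3) ha5), (mul_nonneg (mul_nonneg (mul_nonneg (ha1) ha2) ha4) ha5), (mul_nonneg (mul_nonneg (mul_nonneg (ha1) ha3) ha4) ha5), (mul_nonneg (mul_nonneg (mul_nonneg (ha2) ha3) ha4) ha5)]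
  · linarith [(mul_nonneg (mul_nonneg (mul_nonneg (hb1) hb2) hb3) hb4), (mul_nonneg (mul_nonneg (mul_nonneg (hb1) hb2) hb3) hb5), (mul_nonneg (mul_nonneg (mul_nonneg (hb1) hb2) hb4) hb5), (mul_nonneg (mul_nonneg (mul_nonneg (hb1) hb3) hb4) hb5), (mul_nonneg (mul_nonneg (mul_nonneg (hb2) hb3) hb4) hb5)]
  · linarith [(mul_nonneg (mul_nonneg (mul_nonneg (mul_nonneg (ha1) ha2) ha3) ha4) ha5)]
  · linarith [(mul_nonneg (mul_nonneg (mul_nonneg (mul_nonneg (hb1) hb2) hb3) hb4) hb5)]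

/-- For a monic real quintic `X^5 + A4 X^4 + A3 X^3 + A2 X^2 + A1 X + A0`
with all five roots real, all roots lie in `[-1,1]` iff the five stated inequalities hold. -/
theorem quintic_roots_in_unit_interval_iff
    (A0 A1 A2 A3 A4 : ℝ)
    (P : Polynomial ℝ)
    (hP : P = X ^ 5 + C A4 * X ^ 4 + C A3 * X ^ 3 + C A2 * X ^ 2 + C A1 * X + C A0)
    (hsplit : (P.map (RingHom.id ℝ)).Splits) :
    (∀ r ∈ P.roots, |r| ≤ 1) ↔
      (|A4| ≤ 5 ∧
       4 * |A4| ≤ 10 + A3 ∧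
       |A2 + 6 * A4| ≤ 10 + 3 * A3 ∧
       |2 * A2 + 4 * A4| ≤ 5 + A1 + 3 * A3 ∧
       |A0 + A2 + A4| ≤ 1 + A1 + A3) := by
  have hmonic : P.Monic := by rw [hP]; monicity!
  have hdeg : P.natDegree = 5 := by rw [hP]; compute_degree!
  constructor
  · intro h
    have hcard : P.roots.card = 5 := by
      rw [(splits_iff_card_roots (f := P)).mp (by simpa using hsplit), hdeg]
    have hprod : P = (P.roots.map fun a => X - C a).prod :=
      (by simpa using hsplit : P.Splits).eq_prod_roots_of_monic hmonic
    obtain ⟨l, hl⟩ := Quot.exists_rep P.roots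
    rw [← hl] at hcard hprod
    have hlen : l.length = 5 := by simpa using hcard
    rcases l with _ | ⟨r1, _ | ⟨r2, _ | ⟨r3, _ | ⟨r4, _ | ⟨r5, _ | ⟨r6, l⟩⟩⟩⟩⟩⟩ <;> simp at hlen
    have key : ∀ x : ℝ, x^5 + A4*x^4 + A3*x^3 + A2*x^2 + A1*x + A0
        = (x-r1)*(x-r2)*(x-r3)*(x-r4)*(x-r5) := by
      intro x
      have h2 := congrArg (eval x) (hP.symm.trans hprod)
      simp [Multiset.quot_mk_to_coe, eval_pow, eval_mul, eval_add] at h2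
      linarith [h2]
    have h0 := key 0
    have h1 := key 1
    have hm1 := key (-1)
    have h2 := key 2
    have hm2 := key (-2)
    have h3 := key 3
    have hb : ∀ r ∈ P.roots, -1 ≤ r ∧ r ≤ 1 := fun r hr => abs_le.mp (h r hr)
    have hm : ∀ r ∈ ({r1, r2, r3, r4, r5} : Set ℝ), -1 ≤ r ∧ r ≤ 1 := by
      intro r hr
      apply hb
      rw [← hl]
      simp at hr
      rcases hr with h|h|h|h|h <;> subst h <;> simp
    obtain ⟨hb1, ha1⟩ := hm r1 (by simp)
    obtain ⟨hb2, ha2⟩ := hm r2 (by simp)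
    obtain ⟨hb3, ha3⟩ := hm r3 (by simp)
    obtain ⟨hb4, ha4⟩ := hm r4 (by simp)
    obtain ⟨hb5, ha5⟩ := hm r5 (by simp)
    obtain ⟨e1, e2, e3, e4, e5, e6, e7, e8, e9, e10⟩ :=
      quintic_aux_fwd r1 r2 r3 r4 r5 A0 A1 A2 A3 A4
        (by linarith) (by linarith) (by linarith) (by linarith) (by linarith)
        (by linarith) (by linarith) (by linarith) (by linarith) (by linarith)
        (by linarith) (by linarith) (by linarith) (by linarith) (by linarith)
    refine ⟨abs_le.mpr ⟨by linarith, by linarith⟩, ?_, abs_le.mpr ⟨by linarith, by linarith⟩,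
      abs_le.mpr ⟨by linarith, by linarith⟩, abs_le.mpr ⟨by linarith, by linarith⟩⟩
    rcases abs_cases A4 with ⟨hA, _⟩ | ⟨hA, _⟩ <;> rw [hA] <;> linarith
  · rintro ⟨g1, g2, g3, g4, g5⟩ r hr
    rw [abs_le] at g1 g3 g4 g5
    have habs : -(10 + A3) ≤ 4 * A4 ∧ 4 * A4 ≤ 10 + A3 := by
      rcases abs_cases A4 with ⟨hA, _⟩ | ⟨hA, _⟩ <;> constructor <;> nlinarith [abs_nonneg A4, g2]
    have hroot : r^5 + A4*r^4 + A3*r^3 + A2*r^2 + A1*r + A0 = 0 := by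
      have := isRoot_of_mem_roots hr
      rw [hP] at this
      simp [IsRoot, eval_pow, eval_mul, eval_add] at this
      linarith [this]
    exact quintic_aux_back A0 A1 A2 A3 A4 r hroot
      (by linarith [g5.1, g5.2]) (by linarith [g4.1, g4.2]) (by linarith [g3.1, g3.2])
      (by linarith [habs.1, habs.2]) (by linarith [g1.1, g1.2])
      (by linarith [g5.1, g5.2]) (by linarith [g4.1, g4.2]) (by linarith [g3.1, g3.2])
      (by linarith [habs.1, habs.2]) (by linarith [g1.1, g1.2])
end

section
/- For the ultrarelativistic Landau-frame quadratic x̂² - bψ x̂ - c with c = 4/(nΩ_J) > 0 and b = nΩ_{J,n} J/(2Ω_J n), the causality condition that both roots lie in [-1,1] for all ψ ∈ [-1,1] is equivalent to the single inequality (1/2)|J/n| ≤ (nΩ_J - 4)/(n² |Ω_{J,n}|), provided Ω_{J,n} ≠ 0 and nΩ_J > 4. -/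
lemma forward_aux (B c : ℝ) (hB : 0 ≤ B) (hc : 0 < c)
    (h : ∀ x : ℝ, x ^ 2 - B * x - c = 0 → |x| ≤ 1) : B ≤ 1 - c := by
  have hD0 : 0 ≤ Real.sqrt (B ^ 2 + 4 * c) := Real.sqrt_nonneg _
  have hD2 : Real.sqrt (B ^ 2 + 4 * c) ^ 2 = B ^ 2 + 4 * c :=
    Real.sq_sqrt (by positivity)
  have hroot : ((B + Real.sqrt (B ^ 2 + 4 * c)) / 2) ^ 2
      - B * ((B + Real.sqrt (B ^ 2 + 4 * c)) / 2) - c = 0 := by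
    linear_combination hD2 / 4
  have hx1 := (abs_le.mp (h _ hroot)).2
  have h2 : Real.sqrt (B ^ 2 + 4 * c) ≤ 2 - B := by linarith
  nlinarith [hD2, hD0, mul_nonneg (by linarith : (0:ℝ) ≤ 2 - B - Real.sqrt (B ^ 2 + 4 * c))
    (by linarith : (0:ℝ) ≤ 2 - B + Real.sqrt (B ^ 2 + 4 * c))]

lemma backward_aux (b c x : ℝ) (hc : 0 < c) (hb : |b| ≤ 1 - c)
    (hx : x ^ 2 - b * x - c = 0) : |x| ≤ 1 := by
  have h1 : b * x ≤ |b| * |x| := le_trans (le_abs_self _) (le_of_eq (abs_mul b x))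
  nlinarith [h1, mul_le_mul_of_nonneg_right hb (abs_nonneg x), sq_abs x, abs_nonneg x]

theorem landau_UR_causality_iff
    (n ΩJ ΩJn J : ℝ) (hn : 0 < n) (hΩ : 0 < ΩJ) (hJ : 0 ≤ J)
    (hΩn : ΩJn ≠ 0) (hbig : 4 < n * ΩJ) :
    (∀ ψ ∈ Set.Icc (-1 : ℝ) 1, ∀ x : ℝ,
        x ^ 2 - (n * ΩJn / (2 * ΩJ)) * (ψ * J / n) * x - 4 / (n * ΩJ) = 0 →
        |x| ≤ 1) ↔
      (1 / 2) * |J / n| ≤ (n * ΩJ - 4) / (n ^ 2 * |ΩJn|) := by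
  have hA : 0 < |ΩJn| := abs_pos.mpr hΩn
  have hnΩ : 0 < n * ΩJ := by positivity
  have hc0 : 0 < 4 / (n * ΩJ) := by positivity
  have hB0 : 0 ≤ |ΩJn| * J / (2 * ΩJ) := by positivity
  -- equivalence of the two inequality forms
  have key : (|ΩJn| * J / (2 * ΩJ) ≤ 1 - 4 / (n * ΩJ)) ↔
      (1 / 2) * |J / n| ≤ (n * ΩJ - 4) / (n ^ 2 * |ΩJn|) := by
    rw [abs_div, abs_of_nonneg hJ, abs_of_pos hn,
      show (1 - 4 / (n * ΩJ)) = (n * ΩJ - 4) / (n * ΩJ) by field_simp,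
      show (1 / 2 : ℝ) * (J / n) = J / (2 * n) by ring,
      div_le_div_iff₀ (by positivity) (by positivity),
      div_le_div_iff₀ (by positivity) (by positivity)]
    constructor <;> intro h <;> nlinarith [hΩ, hn, hA]
  rw [← key]
  constructor
  · intro h
    refine forward_aux _ _ hB0 hc0 (fun x hx => ?_)
    set ψ : ℝ := if 0 ≤ ΩJn then 1 else -1 with hψdef
    have hψmem : ψ ∈ Set.Icc (-1 : ℝ) 1 := by
      unfold ψ; split <;> constructor <;> norm_num
    have hcoef : (n * ΩJn / (2 * ΩJ)) * (ψ * J / n) = |ΩJn| * J / (2 * ΩJ) := by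
      unfold ψ
      rcases le_or_gt 0 ΩJn with h0 | h0
      · rw [if_pos h0, abs_of_nonneg h0]; field_simp
      · rw [if_neg (not_le.mpr h0), abs_of_neg h0]; field_simp
    refine h ψ hψmem x ?_
    rw [hcoef]; exact hx
  · intro hBc ψ hψ x hx
    have hψ1 : |ψ| ≤ 1 := abs_le.mpr ⟨hψ.1, hψ.2⟩
    have hbB : |(n * ΩJn / (2 * ΩJ)) * (ψ * J / n)| ≤ |ΩJn| * J / (2 * ΩJ) := by
      rw [show (n * ΩJn / (2 * ΩJ)) * (ψ * J / n) = ψ * (ΩJn * J / (2 * ΩJ)) by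
          field_simp,
        abs_mul, abs_div, abs_mul, abs_of_nonneg hJ,
        abs_of_pos (show (0:ℝ) < 2 * ΩJ by positivity)]
      calc |ψ| * (|ΩJn| * J / (2 * ΩJ)) ≤ 1 * (|ΩJn| * J / (2 * ΩJ)) :=
            mul_le_mul_of_nonneg_right hψ1 hB0
        _ = |ΩJn| * J / (2 * ΩJ) := one_mul _
    exact backward_aux _ _ _ hc0 (le_trans hbB hBc) hx
end

section
/- Let n > 0 and suppose Ω_J T = (5λ/4P)((ε+P)/n)² with the ultrarelativistic equation of state P = ε/3 = nT, and λ = 1. Then the Landau-frame nonlinear causality bound (1/2)|J/n| ≤ (nΩ_J - 4)/(n²|Ω_{J,n}|) evaluates to |J/n| ≤ 8/5. In particular, there is a nonempty region 1 < |J/n| ≤ 8/5 allowed by causality in which the baryon current J^μ = n u^μ + 𝒥^μ is spacelike. -/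
/-- For the ultrarelativistic ideal gas `P = ε/3 = nT` and transport
coefficient `Ω_J(m) = (5λ/(4 P T(m))) ((ε+P)/m)²` with `λ = 1`, the Landau-frame
nonlinear causality bound `(1/2)|J/n| ≤ (nΩ_J - 4)/(n²|Ω_{J,n}|)` (with
`Ω_{J,n} = ∂Ω_J/∂n` at fixed `ε`) is equivalent to `|J/n| ≤ 8/5`.  In particular there
exist causally-allowed values of `J` with `1 < |J/n|`, for which the baryon current
`J^μ = n u^μ + 𝒥^μ`, with `J^μ J_μ = -n² + J²`, is spacelike. -/
theorem landau_UR_spacelike_baryon_current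
    (ε n : ℝ) (hε : 0 < ε) (hn : 0 < n)
    (ΩJ : ℝ → ℝ)
    (hΩJ : ΩJ = fun m =>
      (5 * 1 / (4 * (ε / 3) * (ε / (3 * m)))) * ((ε + ε / 3) / m) ^ 2) :
    (∀ J : ℝ,
      ((1 / 2) * |J / n| ≤ (n * ΩJ n - 4) / (n ^ 2 * |deriv ΩJ n|) ↔
        |J / n| ≤ 8 / 5)) ∧
    (∃ J : ℝ,
      (1 / 2) * |J / n| ≤ (n * ΩJ n - 4) / (n ^ 2 * |deriv ΩJ n|) ∧
      0 < -n ^ 2 + J ^ 2) := by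
  have hval : ΩJ n = 20 / n := by
    rw [hΩJ]; field_simp; ring
  have heq : ΩJ =ᶠ[nhds n] fun m => 20 * m⁻¹ := by
    filter_upwards [IsOpen.mem_nhds isOpen_Ioi hn] with m hm
    have hm' : (m : ℝ) ≠ 0 := ne_of_gt hm
    rw [hΩJ]; field_simp; ring
  have hderiv : deriv ΩJ n = -20 / n ^ 2 := by
    rw [heq.deriv_eq, deriv_const_mul _ (differentiableAt_inv (ne_of_gt hn)),
      deriv_inv]
    field_simp
  have habs : |deriv ΩJ n| = 20 / n ^ 2 := by
    rw [hderiv, abs_div, abs_neg, abs_of_nonneg (by norm_num : (0:ℝ) ≤ 20),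
      abs_of_nonneg (by positivity)]
  have hRHS : (n * ΩJ n - 4) / (n ^ 2 * |deriv ΩJ n|) = 4 / 5 := by
    rw [hval, habs]
    field_simp
    ring
  constructor
  · intro J
    rw [hRHS]
    constructor <;> intro h <;> linarith
  · refine ⟨8 * n / 5, ?_, ?_⟩
    · rw [hRHS]
      have : |8 * n / 5 / n| = 8 / 5 := by
        rw [abs_of_nonneg (by positivity)]
        field_simp
      rw [this]; norm_num
    · nlinarith
end

section
/- For λ̃ in the interval 2/5 ≤ λ̃ ≤ (2/5)(2 + √2), the expression (2/3)√(2/(12 - 45λ̃) - 2/(5λ̃) + 4/3) is a well-defined real number and is at most 2/3; i.e., 2/(12 - 45λ̃) - 2/(5λ̃) + 4/3 ∈ [0, 1] on that interval. -/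
/-- For `2/5 ≤ λ̃ ≤ (2/5)(2 + √2)`, the radicand
`2/(12 - 45λ̃) - 2/(5λ̃) + 4/3` lies in `[0,1]`, so that
`(2/3)√(2/(12-45λ̃) - 2/(5λ̃) + 4/3) ≤ 2/3`. -/
theorem eckart_UR_psi_zero_bound (l : ℝ)
    (h1 : 2 / 5 ≤ l) (h2 : l ≤ (2 / 5) * (2 + Real.sqrt 2)) :
    (2 / (12 - 45 * l) - 2 / (5 * l) + 4 / 3) ∈ Set.Icc (0 : ℝ) 1 ∧
    (2 / 3) * Real.sqrt (2 / (12 - 45 * l) - 2 / (5 * l) + 4 / 3) ≤ 2 / 3 := by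
  have hs2 : Real.sqrt 2 ^ 2 = 2 := Real.sq_sqrt (by norm_num)
  have hs0 : (1:ℝ) ≤ Real.sqrt 2 := by
    nlinarith [Real.sqrt_nonneg 2]
  have ha : 12 - 45 * l < 0 := by nlinarith
  have hb : (0:ℝ) < 5 * l := by nlinarith
  have hne : (12 - 45 * l) ≠ 0 := ne_of_lt ha
  have hne' : (5 * l) ≠ 0 := ne_of_gt hb
  have hden : 3 * (12 - 45 * l) * (5 * l) < 0 := by nlinarith
  have hf : 2 / (12 - 45 * l) - 2 / (5 * l) + 4 / 3
      = (-36 * (5 * l - 2) * (5 * l - 1)) / (3 * (12 - 45 * l) * (5 * l)) := by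
    field_simp; ring
  have h0 : 0 ≤ 2 / (12 - 45 * l) - 2 / (5 * l) + 4 / 3 := by
    rw [hf]
    apply div_nonneg_of_nonpos (by nlinarith) (by linarith)
  have hup : 2 / (12 - 45 * l) - 2 / (5 * l) + 4 / 3 ≤ 1 := by
    have hg : (2 / (12 - 45 * l) - 2 / (5 * l) + 4 / 3) - 1
        = (-9 * (25 * l ^ 2 - 40 * l + 8)) / (3 * (12 - 45 * l) * (5 * l)) := by
      field_simp; ring
    have hnum : 0 ≤ -9 * (25 * l ^ 2 - 40 * l + 8) := by
      nlinarith [mul_nonneg (by nlinarith : (0:ℝ) ≤ 2 * Real.sqrt 2 - (5 * l - 4))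
        (by nlinarith : (0:ℝ) ≤ 5 * l - 4 + 2 * Real.sqrt 2)]
    have := div_nonpos_of_nonneg_of_nonpos hnum hden.le
    linarith [hg ▸ this]
  refine ⟨⟨h0, hup⟩, ?_⟩
  have := Real.sqrt_le_one.mpr hup
  linarith
end
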